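/- Let n ≥ 4 and β ∈ ℝ with β ≠ 2−n. For each 1 ≤ k ≤ n−3, the function χ_k defined on the open set U = {x ∈ ℝ^{n−1} : x_1 > 0} by χ_k(x) = ξ_k(x) · x_1^{−(k+1)(n−3+β)/(n−2+β)} (using the real power function) satisfies the partial differential equation Σ_{j=1}^{n−1} (n−1−j+β) x_j · ∂χ_k/∂x_j = 0 on U. (These are the n−3 generalized Casimir invariants of the solvable Lie algebras s_{n+1,1}(β), and, for β = 0 and β = 1 respectively, of s_{n+1,2} and s_{n+1,5}.) -/

import Mathlib

/-!
With the weights `w_j = n - 1 - j + β`, the operator `F_T` is the derivative along the dilation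
field `x ↦ (w_j x_j)_j`. Every monomial of `ξ_k` has weighted degree `(k+1)(n-3+β)`, so by
Euler's identity the derivative of `ξ_k` along this field is `(k+1)(n-3+β) ξ_k`, while that of
`x_1^c` is `c (n-2+β) x_1^c`. The exponent `c = -(k+1)(n-3+β)/(n-2+β)` makes the two terms of the
Leibniz rule for `χ_k = ξ_k x_1^c` cancel.
-/

open MvPolynomial in
/-- The polynomial invariants `ξ_k` of the coadjoint representation of `n_{n,1}`:
`ξ_0 = x 1` and, for `k ≥ 1`,
`ξ_k = ((-1)^k k/(k+1)!) x_2^{k+1} + Σ_{j=0}^{k-1} ((-1)^j/j!) x_2^j x_{k+2-j} x_1^{k-j}`. -/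
noncomputable def xi (F : Type*) [Field F] : ℕ → MvPolynomial ℕ F
  | 0 => X 1
  | k + 1 =>
      C ((-1 : F) ^ (k + 1) * ((k + 1 : ℕ) : F) / (((k + 2).factorial : ℕ) : F)) *
          X 2 ^ (k + 2) +
        ∑ j ∈ Finset.range (k + 1),
          C ((-1 : F) ^ j / ((j.factorial : ℕ) : F)) * X 2 ^ j *
            X (k + 3 - j) * X 1 ^ (k + 1 - j)

/-- The `1`-based coordinates of a point `x ∈ ℝ^{n-1}`: `coords n x i = x_i` for
`1 ≤ i ≤ n-1` and `0` otherwise. -/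
noncomputable def coords (n : ℕ) (x : Fin (n - 1) → ℝ) : ℕ → ℝ :=
  fun i => if h : 1 ≤ i ∧ i ≤ n - 1 then x ⟨i - 1, by omega⟩ else 0

/-- The `j`-th coordinate unit vector of `ℝ^{n-1}` (`1`-based). -/
noncomputable def unitv (n : ℕ) (j : ℕ) : Fin (n - 1) → ℝ :=
  fun i => if i.val + 1 = j then 1 else 0

/-- The generalized Casimir invariants `χ_k = ξ_k · x_1^{-(k+1)(n-3+β)/(n-2+β)}`
of the solvable Lie algebras `s_{n+1,1}(β)` (and, for `β = 0`, `β = 1`, of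
`s_{n+1,2}` and `s_{n+1,5}`), defined on `{x : x_1 > 0}` via the real power. -/
noncomputable def chiS1 (n : ℕ) (β : ℝ) (k : ℕ) (x : Fin (n - 1) → ℝ) : ℝ :=
  MvPolynomial.eval (coords n x) (xi ℝ k) *
    (coords n x 1) ^
      (-(((k + 1 : ℕ) : ℝ) * ((n : ℝ) - 3 + β) / ((n : ℝ) - 2 + β)))


open MvPolynomial

namespace MvPolynomial

variable {R σ : Type*} [CommSemiring R]

theorem weight_eq_sum_of_eq_zero {w : σ → R} {s : Finset σ} (hw : ∀ i ∉ s, w i = 0)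
    (m : σ →₀ ℕ) : Finsupp.weight w m = ∑ i ∈ s, m i • w i := by
  classical
  rw [Finsupp.weight_apply, Finsupp.sum]
  calc ∑ i ∈ m.support, m i • w i = ∑ i ∈ m.support ∩ s, m i • w i :=
        (Finset.sum_subset Finset.inter_subset_left fun i _ hi ↦ by
          simp [hw i fun his ↦ hi (Finset.mem_inter.mpr ⟨‹_›, his⟩)]).symm
    _ = ∑ i ∈ s, m i • w i :=
        Finset.sum_subset Finset.inter_subset_right fun i _ hi ↦ by
          simp [Finsupp.notMem_support_iff.mp fun him ↦ hi (Finset.mem_inter.mpr ⟨him, ‹_›⟩)]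

theorem IsWeightedHomogeneous.sum_weight_smul_X_mul_pderiv {w : σ → R} {d : R}
    {φ : MvPolynomial σ R} (h : φ.IsWeightedHomogeneous w d) {s : Finset σ}
    (hw : ∀ i ∉ s, w i = 0) : ∑ i ∈ s, w i • (X i * pderiv i φ) = d • φ := by
  rw [← mem_weightedHomogeneousSubmodule, weightedHomogeneousSubmodule_eq_finsupp_supported,
    AddMonoidAlgebra.supported_eq_span_single] at h
  refine Submodule.span_induction ?_ ?_ (fun p q _ _ hp hq ↦ ?_) (fun r p _ h ↦ ?_) h
  · rintro _ ⟨m, hm, rfl⟩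
    rw [Set.mem_ofPred, weight_eq_sum_of_eq_zero hw] at hm
    simp_rw [single_eq_monomial, X_mul_pderiv_monomial]
    rw [← hm, Finset.sum_smul]
    exact Finset.sum_congr rfl fun i _ ↦ by rw [smul_assoc, smul_comm]
  · simp
  · simp_rw [map_add, mul_add, smul_add, Finset.sum_add_distrib, hp, hq]
  · simp_rw [(pderiv _).map_smul, mul_smul_comm, smul_comm (w _) r, ← Finset.smul_sum, h,
      smul_comm r d]

section Calculus

variable {E : Type*} [NormedAddCommGroup E] [NormedSpace ℝ E]

theorem hasFDerivAt_eval_comp {u : σ → E → ℝ} {u' : σ → E →L[ℝ] ℝ} {x : E} {s : Finset σ}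
    (hu : ∀ i, HasFDerivAt (u i) (u' i) x) (hs : ∀ i ∉ s, u' i = 0) (p : MvPolynomial σ ℝ) :
    HasFDerivAt (fun y ↦ eval (fun i ↦ u i y) p)
      (∑ i ∈ s, eval (fun i ↦ u i x) (pderiv i p) • u' i) x := by
  induction p using MvPolynomial.induction_on with
  | C a => simpa [pderiv_C] using hasFDerivAt_const a x
  | add p q hp hq =>
    simp only [map_add, add_smul, Finset.sum_add_distrib]
    exact hp.add hq
  | mul_X p i hp =>
    have hX : ∑ l ∈ s, eval (fun j ↦ u j x) (pderiv l (X i)) • u' l = u' i := by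
      rw [Finset.sum_eq_single i (fun l _ hl ↦ by simp [pderiv_X_of_ne hl.symm])
        fun hi ↦ by simp [hs i hi]]
      simp
    simp only [map_mul, eval_X]
    refine (hp.mul (hu i)).congr_fderiv ?_
    simp only [pderiv_mul, map_add, map_mul, eval_X, add_smul, Finset.sum_add_distrib,
      mul_comm _ (u i x), mul_smul, ← Finset.smul_sum, hX]
    abel

end Calculus

end MvPolynomial

noncomputable def coordCLM (n i : ℕ) : (Fin (n - 1) → ℝ) →L[ℝ] ℝ :=
  if h : 1 ≤ i ∧ i ≤ n - 1 then ContinuousLinearMap.proj ⟨i - 1, by omega⟩ else 0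

theorem coordCLM_apply (n i : ℕ) (y : Fin (n - 1) → ℝ) : coordCLM n i y = coords n y i := by
  unfold coordCLM coords
  split_ifs <;> rfl

theorem hasFDerivAt_coords (n i : ℕ) (x : Fin (n - 1) → ℝ) :
    HasFDerivAt (fun y ↦ coords n y i) (coordCLM n i) x := by
  have h : (fun y ↦ coords n y i) = coordCLM n i := funext fun y ↦ (coordCLM_apply n i y).symm
  rw [h]
  exact (coordCLM n i).hasFDerivAt

theorem hasFDerivAt_eval_coords {n : ℕ} (p : MvPolynomial ℕ ℝ) (x : Fin (n - 1) → ℝ) :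
    HasFDerivAt (fun y ↦ eval (coords n y) p)
      (∑ i ∈ Finset.Icc 1 (n - 1), eval (coords n x) (pderiv i p) • coordCLM n i) x :=
  hasFDerivAt_eval_comp (u := fun i y ↦ coords n y i)
    (fun i ↦ hasFDerivAt_coords n i x)
    (fun i hi ↦ dif_neg (by simpa using hi)) p

noncomputable def dilationWeight (n : ℕ) (β : ℝ) (j : ℕ) : ℝ :=
  if j ∈ Finset.Icc 1 (n - 1) then (n : ℝ) - 1 - j + β else 0

theorem dilationWeight_of_mem {n : ℕ} (β : ℝ) {j : ℕ} (hj : j ∈ Finset.Icc 1 (n - 1)) :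
    dilationWeight n β j = ((n - 1 - j : ℕ) : ℝ) + β := by
  rw [Finset.mem_Icc] at hj
  rw [dilationWeight, if_pos (Finset.mem_Icc.mpr hj), Nat.cast_sub hj.2, Nat.cast_sub (by omega)]
  simp

noncomputable def dilationField (n : ℕ) (β : ℝ) (x : Fin (n - 1) → ℝ) : Fin (n - 1) → ℝ :=
  fun i ↦ dilationWeight n β (i + 1) * x i

theorem coords_dilationField (n : ℕ) (β : ℝ) (x : Fin (n - 1) → ℝ) (j : ℕ) :
    coords n (dilationField n β x) j = dilationWeight n β j * coords n x j := by
  unfold coords dilationField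
  split_ifs with hj
  · simp only [Nat.sub_add_cancel hj.1]
  · simp

theorem sum_mul_apply_unitv_eq_apply_dilationField {n : ℕ} (β : ℝ) (x : Fin (n - 1) → ℝ)
    (L : (Fin (n - 1) → ℝ) →L[ℝ] ℝ) :
    ∑ j ∈ Finset.Icc 1 (n - 1), (((n - 1 - j : ℕ) : ℝ) + β) * coords n x j * L (unitv n j) =
      L (dilationField n β x) := by
  have hv : dilationField n β x =
      ∑ j ∈ Finset.Icc 1 (n - 1), (dilationWeight n β j * coords n x j) • unitv n j := by
    ext i
    simp only [Finset.sum_apply, Pi.smul_apply, unitv, smul_eq_mul, mul_ite, mul_one, mul_zero,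
      Finset.sum_ite_eq, Finset.mem_Icc]
    rw [if_pos (by omega)]
    simp [dilationField, coords]
  rw [hv, map_sum]
  refine Finset.sum_congr rfl fun j hj ↦ ?_
  rw [map_smul, smul_eq_mul, dilationWeight_of_mem β hj]

theorem exists_hasFDerivAt_eval_coords_apply_dilationField {n : ℕ} {β d : ℝ}
    {φ : MvPolynomial ℕ ℝ} (h : φ.IsWeightedHomogeneous (dilationWeight n β) d)
    (x : Fin (n - 1) → ℝ) :
    ∃ L : (Fin (n - 1) → ℝ) →L[ℝ] ℝ, HasFDerivAt (fun y ↦ eval (coords n y) φ) L x ∧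
      L (dilationField n β x) = d * eval (coords n x) φ := by
  refine ⟨_, hasFDerivAt_eval_coords φ x, ?_⟩
  have hEuler := congrArg (eval (coords n x))
    (h.sum_weight_smul_X_mul_pderiv fun i hi ↦ if_neg hi)
  simp only [map_sum, smul_eval, map_mul, eval_X] at hEuler
  rw [← hEuler, sum_apply]
  refine Finset.sum_congr rfl fun i _ ↦ ?_
  rw [smul_apply, coordCLM_apply, coords_dilationField, smul_eq_mul]
  ring

theorem exists_hasFDerivAt_coords_one_rpow_apply_dilationField {n : ℕ} (β c : ℝ)
    {x : Fin (n - 1) → ℝ} (hx : 0 < coords n x 1) :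
    ∃ L : (Fin (n - 1) → ℝ) →L[ℝ] ℝ, HasFDerivAt (fun y ↦ coords n y 1 ^ c) L x ∧
      L (dilationField n β x) = c * dilationWeight n β 1 * coords n x 1 ^ c := by
  refine ⟨_, (hasFDerivAt_coords n 1 x).rpow_const (Or.inl hx.ne'), ?_⟩
  rw [smul_apply, coordCLM_apply, coords_dilationField, smul_eq_mul,
    Real.rpow_sub_one hx.ne']
  field_simp

theorem isWeightedHomogeneous_xi {n k : ℕ} (β : ℝ) (hk1 : 1 ≤ k) (hk2 : k ≤ n - 3) :
    (xi ℝ k).IsWeightedHomogeneous (dilationWeight n β) ((k + 1) * ((n : ℝ) - 3 + β)) := by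
  obtain ⟨m, rfl⟩ : ∃ m, k = m + 1 := ⟨k - 1, by omega⟩
  have hX : ∀ j, 1 ≤ j → j ≤ n - 1 →
      (X j : MvPolynomial ℕ ℝ).IsWeightedHomogeneous (dilationWeight n β) ((n : ℝ) - 1 - j + β) :=
    fun j h1 h2 ↦ by
      simpa [dilationWeight, h1, h2] using isWeightedHomogeneous_X ℝ (dilationWeight n β) j
  refine IsWeightedHomogeneous.add ?_ (IsWeightedHomogeneous.sum _ _ _ fun j hj ↦ ?_)
  -- The `rfl` goals identify the `CommSemiring ℝ` instance `xi` gets from `Field ℝ`.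
  · convert ((hX 2 (by omega) (by omega)).pow (m + 2)).C_mul _ using 1
    · rfl
    push_cast
    ring
  · rw [Finset.mem_range] at hj
    convert ((((hX 2 (by omega) (by omega)).pow j).C_mul _).mul
      (hX (m + 3 - j) (by omega) (by omega))).mul ((hX 1 (by omega) (by omega)).pow (m + 1 - j))
      using 1
    · rfl
    push_cast [nsmul_eq_mul, Nat.cast_sub (by omega : j ≤ m + 3),
      Nat.cast_sub (by omega : j ≤ m + 1)]
    ring

theorem chiS1_invariant (n : ℕ) (β : ℝ) (hβ : β ≠ 2 - (n : ℝ))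
    (k : ℕ) (hk1 : 1 ≤ k) (hk2 : k ≤ n - 3)
    (x : Fin (n - 1) → ℝ) (hx : 0 < coords n x 1) :
    DifferentiableAt ℝ (chiS1 n β k) x ∧
    ∑ j ∈ Finset.Icc 1 (n - 1),
      (((n - 1 - j : ℕ) : ℝ) + β) * coords n x j *
        fderiv ℝ (chiS1 n β k) x (unitv n j) = 0 := by
  set c : ℝ := -(((k + 1 : ℕ) : ℝ) * ((n : ℝ) - 3 + β) / ((n : ℝ) - 2 + β)) with hc
  obtain ⟨P', hP, hP'⟩ :=
    exists_hasFDerivAt_eval_coords_apply_dilationField (isWeightedHomogeneous_xi β hk1 hk2) x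
  obtain ⟨R', hR, hR'⟩ := exists_hasFDerivAt_coords_one_rpow_apply_dilationField β c hx
  have hχ : HasFDerivAt (chiS1 n β k) _ x := hP.mul hR
  refine ⟨hχ.differentiableAt, ?_⟩
  rw [sum_mul_apply_unitv_eq_apply_dilationField, hχ.fderiv, add_apply, smul_apply, smul_apply,
    hP', hR', smul_eq_mul, smul_eq_mul, dilationWeight, if_pos (by simp; omega)]
  have hne : (n : ℝ) - 2 + β ≠ 0 := fun h ↦ hβ (by linarith)
  rw [hc]
  push_cast
  field_simp
  ring
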